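/- arXiv:1601.05006 — 2 statements merged into one kernel-verified Lean document; each statement's English description precedes it below -/
import Mathlib

section
/- When n is odd, the function C := (x_1 x_3 ⋯ x_n)/(x_2 x_4 ⋯ x_{n−1}) is a Casimir of the Poisson bracket {x_i,x_j} = x_i x_j (i<j) on R^n; that is, {C, x_j} = 0 for all j = 1,...,n. -/
open Finset Real

/-- partial derivative of `f` in the `i`-th coordinate direction -/
noncomputable def pd {n : ℕ} (i : Fin n) (f : (Fin n → ℝ) → ℝ) (x : Fin n → ℝ) : ℝ :=
  fderiv ℝ f x (Pi.single i 1)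

/-- the quadratic Poisson bracket `{x_i,x_j} = x_i x_j` for `i < j` -/
noncomputable def pb {n : ℕ} (f g : (Fin n → ℝ) → ℝ) (x : Fin n → ℝ) : ℝ :=
  ∑ i : Fin n, ∑ j : Fin n,
    if i < j then x i * x j * (pd i f x * pd j g x - pd j f x * pd i g x) else 0

/-- `v a j x = a_1 x_1 + ⋯ + a_j x_j` (sum of the first `j` terms, 1-based). -/
noncomputable def v {n : ℕ} (a : Fin n → ℝ) (j : ℕ) (x : Fin n → ℝ) : ℝ :=
  ∑ k : Fin n, if (k : ℕ) < j then a k * x k else 0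

/-- right-hand side of the generalized Lotka–Volterra system -/
noncomputable def rhs {n : ℕ} (a : Fin n → ℝ) (x : Fin n → ℝ) (i : Fin n) : ℝ :=
  x i * ((∑ j : Fin n, if i < j then a j * x j else 0)
        - ∑ j : Fin n, if j < i then a j * x j else 0)

/-- `J k = (x_1 x_3 ⋯ x_{2k-1})/(x_2 x_4 ⋯ x_{2k})` (1-based indexing). -/
noncomputable def J {n : ℕ} (k : ℕ) (x : Fin n → ℝ) : ℝ :=
  ∏ m : Fin n, if (m : ℕ) < 2 * k then
    (if (m : ℕ) % 2 = 0 then x m else (x m)⁻¹) else 1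

/-- `I k = (x_{2k+2} x_{2k+4} ⋯ x_n)/(x_{2k+1} x_{2k+3} ⋯ x_{n-1})` (1-based, n even). -/
noncomputable def Ifun {n : ℕ} (k : ℕ) (x : Fin n → ℝ) : ℝ :=
  ∏ m : Fin n, if 2 * k ≤ (m : ℕ) then
    (if (m : ℕ) % 2 = 1 then x m else (x m)⁻¹) else 1

/-- `C = (x_1 x_3 ⋯ x_n)/(x_2 x_4 ⋯ x_{n-1})` for odd `n` (1-based indexing). -/
noncomputable def Cfun {n : ℕ} (x : Fin n → ℝ) : ℝ :=
  ∏ m : Fin n, if (m : ℕ) % 2 = 0 then x m else (x m)⁻¹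

/-! The Euler relation `x_i ∂_i x^a = a_i x^a` of a Laurent monomial turns `{x^a, x_j}` into
`x_j x^a (∑_{i<j} a_i - ∑_{k>j} a_k)`. The exponents of `C` alternate `1, -1, 1, …`, and when
`n` is odd the alternating sums on the two sides of `j` agree, since both ends of `0, …, n-1`
carry `+1`. -/

section

variable {n : ℕ}

theorem pd_coord (x : Fin n → ℝ) (i j : Fin n) :
    pd i (fun y => y j) x = if i = j then 1 else 0 := by
  rw [pd, (hasFDerivAt_apply j x).fderiv, ContinuousLinearMap.proj_apply, Pi.single_apply]
  simp only [eq_comm]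

theorem pb_coord (f : (Fin n → ℝ) → ℝ) (x : Fin n → ℝ) (j : Fin n) :
    pb f (fun y => y j) x
      = x j * (∑ i ∈ Iio j, x i * pd i f x - ∑ k ∈ Ioi j, x k * pd k f x) := by
  have hterm : ∀ i k : Fin n,
      (if i < k then x i * x k * (pd i f x * pd k (fun y => y j) x
        - pd k f x * pd i (fun y => y j) x) else 0)
      = (if k = j then (if i < j then x j * (x i * pd i f x) else 0) else 0)
        - (if i = j then (if j < k then x j * (x k * pd k f x) else 0) else 0) := by
    intro i k
    simp only [pd_coord]
    split_ifs <;> simp_all <;> ring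
  rw [pb, sum_congr rfl fun i _ => sum_congr rfl fun k _ => hterm i k]
  simp only [sum_sub_distrib, sum_ite_irrel, sum_const_zero, sum_ite_eq', mem_univ, if_true,
    ← sum_filter, filter_gt_eq_Iio, filter_lt_eq_Ioi, mul_sub, mul_sum]

noncomputable def laurentMonomial (a : Fin n → ℤ) (y : Fin n → ℝ) : ℝ := ∏ m, y m ^ a m

theorem mul_pd_laurentMonomial {x : Fin n → ℝ} (hx : ∀ i, x i ≠ 0) (a : Fin n → ℤ)
    (i : Fin n) :
    x i * pd i (laurentMonomial a) x = a i * laurentMonomial a x := by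
  have hderiv : HasFDerivAt (laurentMonomial a)
      (∑ m, (∏ k ∈ univ.erase m, x k ^ a k) •
        ((a m * x m ^ (a m - 1)) • (ContinuousLinearMap.proj m : (Fin n → ℝ) →L[ℝ] ℝ))) x :=
    HasFDerivAt.finsetProd fun m _ =>
      (hasDerivAt_zpow (a m) (x m) (Or.inl (hx m))).comp_hasFDerivAt
        (f := fun y : Fin n → ℝ => y m) x (hasFDerivAt_apply m x)
  rw [pd, hderiv.fderiv, laurentMonomial, ← mul_prod_erase univ _ (mem_univ i)]
  have hpow : x i * x i ^ (a i - 1) = x i ^ a i := by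
    rw [← zpow_one_add₀ (hx i), add_sub_cancel]
  simp only [_root_.sum_apply, smul_apply, ContinuousLinearMap.proj_apply, Pi.single_apply,
    smul_eq_mul, mul_ite, mul_one, mul_zero, sum_ite_eq', mem_univ, ↓reduceIte]
  linear_combination (a i * ∏ k ∈ univ.erase i, x k ^ a k) * hpow

theorem pb_laurentMonomial_coord {x : Fin n → ℝ} (hx : ∀ i, x i ≠ 0) (a : Fin n → ℤ)
    (j : Fin n) :
    pb (laurentMonomial a) (fun y => y j) x
      = x j * laurentMonomial a x * ((∑ i ∈ Iio j, a i - ∑ k ∈ Ioi j, a k : ℤ) : ℝ) := by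
  simp only [pb_coord, mul_pd_laurentMonomial hx, ← sum_mul]
  push_cast
  ring

theorem sum_Iio_neg_one_pow_eq_sum_Ioi (hn : Odd n) (j : Fin n) :
    ∑ i ∈ Iio j, (-1 : ℤ) ^ (i : ℕ) = ∑ k ∈ Ioi j, (-1 : ℤ) ^ (k : ℕ) := by
  have hIio : ∑ i ∈ Iio j, (-1 : ℤ) ^ (i : ℕ) = ∑ m ∈ range j, (-1 : ℤ) ^ m := by
    rw [← Nat.Iio_eq_range, ← Fin.map_valEmbedding_Iio, sum_map]
    rfl
  have hIoi : ∑ k ∈ Ioi j, (-1 : ℤ) ^ (k : ℕ)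
      = ∑ m ∈ range n, (-1 : ℤ) ^ m - ∑ m ∈ range (j + 1), (-1 : ℤ) ^ m := by
    rw [← sum_range_add_sum_Ico _ (by omega : (j : ℕ) + 1 ≤ n), add_sub_cancel_left,
      Finset.Ico_add_one_left_eq_Ioo, ← Fin.map_valEmbedding_Ioi, sum_map]
    rfl
  simp only [hIio, hIoi, neg_one_geom_sum, Nat.even_add_one, Nat.not_even_iff_odd.mpr hn]
  by_cases hj : Even (j : ℕ) <;> simp [hj]

theorem Cfun_eq_laurentMonomial :
    (Cfun : (Fin n → ℝ) → ℝ) = laurentMonomial fun m => (-1) ^ (m : ℕ) := by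
  funext y
  refine prod_congr rfl fun m _ => ?_
  dsimp only
  rcases Nat.mod_two_eq_zero_or_one m with h | h
  · rw [if_pos h, (Nat.even_iff.mpr h).neg_one_pow, zpow_one]
  · rw [if_neg (by omega), (Nat.odd_iff.mpr h).neg_one_pow, zpow_neg_one]

end

/-- for odd `n`, `C` is a Casimir: `{C, x_j} = 0` for all `j`. -/
theorem C_is_Casimir (n : ℕ) (hn : Odd n)
    (x : Fin n → ℝ) (hx : ∀ i, x i ≠ 0) (j : Fin n) :
    pb Cfun (fun y => y j) x = 0 := by
  rw [Cfun_eq_laurentMonomial, pb_laurentMonomial_coord hx, sum_Iio_neg_one_pow_eq_sum_Ioi hn,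
    sub_self, Int.cast_zero, mul_zero]
end

section
/- Suppose a_{ℓ+1} ≠ 0, a_1 = ... = a_ℓ = 0, and let i > ℓ+1 with a_i = 0. Then K_i := (H − a_{ℓ+1} x_{ℓ+1}) v_i² / (x_i x_{ℓ+1}) is a first integral of the system ẋ_j = x_j(H − v_j − v_{j−1}), v̇_j = v_j(H − v_j). -/
open Finset Real

/-! Along the flow every partial sum satisfies `v̇_j = v_j (H - v_j)` (the sum `Σ_{k<j} a_k ẋ_k`
telescopes), so `H = v_n` is conserved. With 0-based indices and `v_j = Σ_{m<j} a_m x_m`, as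
`a_m = 0` below `ℓ` and `a_i = 0`, the numerator of `K_i` is `(H - v_{ℓ+1}) v_{i+1}²`, while
`ẋ_i = x_i (H - 2 v_{i+1})` and `ẋ_ℓ = x_ℓ (H - v_{ℓ+1})`: numerator and denominator `x_i x_ℓ`
have the same logarithmic derivative `2H - 2v_{i+1} - v_{ℓ+1}`. -/

section LotkaVolterra

variable {n : ℕ} (a : Fin n → ℝ)

lemma v_succ (X : Fin n → ℝ) (k : Fin n) : v a (k + 1) X = v a k X + a k * X k := by
  unfold v
  rw [← Finset.add_sum_erase _ _ (Finset.mem_univ k), ← Finset.add_sum_erase _ _ (Finset.mem_univ k),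
    if_pos (Nat.lt_succ_self _), if_neg (lt_irrefl _), zero_add, add_comm]
  congr 1
  refine Finset.sum_congr rfl fun m hm => ?_
  have hmk : (m : ℕ) ≠ k := Fin.val_ne_of_ne (Finset.ne_of_mem_erase hm)
  exact if_congr (by omega) rfl rfl

lemma v_of_le {j : ℕ} (hj : n ≤ j) (X : Fin n → ℝ) : v a j X = ∑ m, a m * X m :=
  Finset.sum_congr rfl fun m _ => if_pos (by omega)

lemma v_eq_zero {j : ℕ} (ha : ∀ m : Fin n, (m : ℕ) < j → a m = 0) (X : Fin n → ℝ) :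
    v a j X = 0 :=
  Finset.sum_eq_zero fun m _ => ite_eq_right_iff.2 fun h => by rw [ha m h, zero_mul]

lemma rhs_eq (X : Fin n → ℝ) (j : Fin n) :
    rhs a X j = X j * (v a n X - v a (j + 1) X - v a j X) := by
  have hlt : (∑ m, if m < j then a m * X m else 0) = v a j X :=
    Finset.sum_congr rfl fun m _ => if_congr Fin.lt_def rfl rfl
  have hgt : (∑ m, if j < m then a m * X m else 0) = v a n X - v a (j + 1) X := by
    rw [eq_sub_iff_add_eq, v_of_le a le_rfl, v, ← Finset.sum_add_distrib]
    refine Finset.sum_congr rfl fun m _ => ?_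
    rcases lt_or_ge j m with h | h
    · rw [if_pos h, if_neg (by omega), add_zero]
    · rw [if_neg (not_lt.2 h), if_pos (by omega), zero_add]
  rw [rhs, hlt, hgt]

lemma v_rhs (X : Fin n → ℝ) {j : ℕ} (hj : j ≤ n) :
    v a j (rhs a X) = v a j X * (v a n X - v a j X) := by
  induction j with
  | zero => simp [v]
  | succ j ih =>
    rw [v_succ a (rhs a X) ⟨j, hj⟩, ih (by omega), rhs_eq, v_succ a X ⟨j, hj⟩]
    ring

lemma hasDerivAt_v {x : ℝ → Fin n → ℝ} {x' : Fin n → ℝ} {t : ℝ}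
    (hx : ∀ k, HasDerivAt (fun s => x s k) (x' k) t) (j : ℕ) :
    HasDerivAt (fun s => v a j (x s)) (v a j x') t := by
  refine HasDerivAt.fun_sum fun k _ => ?_
  by_cases h : (k : ℕ) < j
  · simpa only [if_pos h] using (hx k).const_mul (a k)
  · simpa only [if_neg h] using hasDerivAt_const t (0 : ℝ)

lemma hasDerivAt_v_of_flow {x : ℝ → Fin n → ℝ} {t : ℝ}
    (hx : ∀ k, HasDerivAt (fun s => x s k) (rhs a (x t) k) t) {j : ℕ} (hj : j ≤ n) :
    HasDerivAt (fun s => v a j (x s)) (v a j (x t) * (v a n (x t) - v a j (x t))) t :=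
  v_rhs a (x t) hj ▸ hasDerivAt_v a hx j

end LotkaVolterra

theorem K_first_integral_C_general (n : ℕ) (a : Fin n → ℝ) (ℓ : ℕ) (hℓ : ℓ < n)
    (hzero : ∀ m : Fin n, (m : ℕ) < ℓ → a m = 0)
    (i : Fin n) (hai : a i = 0)
    (x : ℝ → Fin n → ℝ) (t : ℝ)
    (hx : ∀ j : Fin n, HasDerivAt (fun s => x s j) (rhs a (x t) j) t)
    (hxl : x t ⟨ℓ, hℓ⟩ ≠ 0) (hxi : x t i ≠ 0) :
    HasDerivAt (fun s =>
      ((∑ m, a m * x s m) - a ⟨ℓ, hℓ⟩ * x s ⟨ℓ, hℓ⟩) * (v a ((i : ℕ) + 1) (x s)) ^ 2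
        / (x s i * x s ⟨ℓ, hℓ⟩)) 0 t := by
  set L : Fin n := ⟨ℓ, hℓ⟩
  have hvℓ : ∀ X, v a ℓ X = 0 := v_eq_zero a hzero
  have hvℓ_succ : ∀ s, a L * x s L = v a (ℓ + 1) (x s) := fun s => by
    rw [v_succ a (x s) L, hvℓ, zero_add]
  have hvi : ∀ X, v a i X = v a (i + 1) X := fun X => by rw [v_succ a X i, hai, zero_mul, add_zero]
  simp_rw [← v_of_le a le_rfl, hvℓ_succ]
  have hD := (((hasDerivAt_v_of_flow a hx le_rfl).fun_sub
    (hasDerivAt_v_of_flow a hx (j := ℓ + 1) hℓ)).fun_mul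
    ((hasDerivAt_v_of_flow a hx (j := i + 1) i.isLt).fun_pow 2)).fun_div
    ((hx i).fun_mul (hx L)) (mul_ne_zero hxi hxl)
  refine hD.congr_deriv ?_
  rw [rhs_eq, rhs_eq, hvi]
  simp only [L, hvℓ]
  field_simp
  ring

/-- for `i > ℓ+1` (1-based) with `a_i = 0`,
`K_i = (H − a_{ℓ+1} x_{ℓ+1}) v_i² / (x_i x_{ℓ+1})` is a first integral
(0-based: index `ℓ` plays the rôle of `ℓ+1`). -/
theorem K_first_integral_C (n : ℕ) (a : Fin n → ℝ) (ℓ : ℕ) (hℓ : ℓ < n)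
    (hzero : ∀ m : Fin n, (m : ℕ) < ℓ → a m = 0)
    (hne : a ⟨ℓ, hℓ⟩ ≠ 0)
    (i : Fin n) (hi : ℓ < (i : ℕ)) (hai : a i = 0)
    (x : ℝ → Fin n → ℝ) (t : ℝ)
    (hx : ∀ j : Fin n, HasDerivAt (fun s => x s j) (rhs a (x t) j) t)
    (hxl : x t ⟨ℓ, hℓ⟩ ≠ 0) (hxi : x t i ≠ 0) :
    HasDerivAt (fun s =>
      ((∑ m, a m * x s m) - a ⟨ℓ, hℓ⟩ * x s ⟨ℓ, hℓ⟩) * (v a ((i : ℕ) + 1) (x s)) ^ 2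
        / (x s i * x s ⟨ℓ, hℓ⟩)) 0 t :=
  K_first_integral_C_general n a ℓ hℓ hzero i hai x t hx hxl hxi
end
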